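/- Let N ≥ 3 and let U_1 = U[z_1,λ_1], U_2 = U[z_2,λ_2] be Aubin–Talenti bubbles with λ_1 ≥ λ_2, and p = (N+2)/(N-2). Then ∫_{ℝ^N} U_1^p U_2 dx is comparable, with constants depending only on N, to ∫_{B(z_1, λ_1^{-1})} U_1^p U_2 dx. -/

import Mathlib

open MeasureTheory Metric

/-- The Aubin–Talenti bubble `U[z,λ]` on `ℝ^N`. -/
noncomputable def bubble15 (N : ℕ) (z : EuclideanSpace ℝ (Fin N)) (lam : ℝ)
    (x : EuclideanSpace ℝ (Fin N)) : ℝ :=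
  ((N : ℝ) * ((N : ℝ) - 2)) ^ (((N : ℝ) - 2) / 4) * lam ^ (((N : ℝ) - 2) / 2)
    * (1 + lam ^ 2 * ‖x - z‖ ^ 2) ^ (-(((N : ℝ) - 2) / 2))

open Real Module

variable {N : ℕ}


private lemma aux15_int (hN : 3 ≤ N) :
    Integrable (fun u : EuclideanSpace ℝ (Fin N) => (1 + ‖u‖ ^ 2) ^ (-(((N : ℝ) + 2) / 2))) := by
  have h : (finrank ℝ (EuclideanSpace ℝ (Fin N)) : ℝ) < (N : ℝ) + 2 := by
    rw [finrank_euclideanSpace_fin]; linarith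
  have e : (fun u : EuclideanSpace ℝ (Fin N) => (1 + ‖u‖ ^ 2) ^ (-(((N : ℝ) + 2) / 2)))
      = fun u : EuclideanSpace ℝ (Fin N) => (1 + ‖u‖ ^ 2) ^ (-((N : ℝ) + 2) / 2) := by
    funext u; congr 1; ring
  rw [e]
  exact integrable_rpow_neg_one_add_norm_sq (μ := volume) h

private lemma aux15_scaled (hN : 3 ≤ N) (z : EuclideanSpace ℝ (Fin N)) {l : ℝ} (hl : 0 < l) :
    Integrable (fun x : EuclideanSpace ℝ (Fin N) =>
        (1 + l ^ 2 * ‖x - z‖ ^ 2) ^ (-(((N : ℝ) + 2) / 2))) ∧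
    (∫ x : EuclideanSpace ℝ (Fin N), (1 + l ^ 2 * ‖x - z‖ ^ 2) ^ (-(((N : ℝ) + 2) / 2)))
      = l⁻¹ ^ N * ∫ u : EuclideanSpace ℝ (Fin N), (1 + ‖u‖ ^ 2) ^ (-(((N : ℝ) + 2) / 2)) := by
  have hfun : (fun x : EuclideanSpace ℝ (Fin N) =>
      (1 + l ^ 2 * ‖x - z‖ ^ 2) ^ (-(((N : ℝ) + 2) / 2)))
      = fun x => (fun u : EuclideanSpace ℝ (Fin N) =>
          (1 + ‖u‖ ^ 2) ^ (-(((N : ℝ) + 2) / 2))) (l • (x - z)) := by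
    funext x
    have h2 : ‖l • (x - z)‖ ^ 2 = l ^ 2 * ‖x - z‖ ^ 2 := by
      rw [norm_smul]; simp [mul_pow, sq_abs]
    simp only [h2]
  have hG : Integrable (fun y : EuclideanSpace ℝ (Fin N) =>
      (1 + ‖l • y‖ ^ 2) ^ (-(((N : ℝ) + 2) / 2))) := (aux15_int hN).comp_smul hl.ne'
  constructor
  · rw [hfun]
    exact hG.comp_sub_right z
  · rw [hfun]
    calc ∫ x : EuclideanSpace ℝ (Fin N),
          (1 + ‖l • (x - z)‖ ^ 2) ^ (-(((N : ℝ) + 2) / 2))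
        = ∫ y : EuclideanSpace ℝ (Fin N), (1 + ‖l • y‖ ^ 2) ^ (-(((N : ℝ) + 2) / 2)) :=
          integral_sub_right_eq_self
            (fun y : EuclideanSpace ℝ (Fin N) => (1 + ‖l • y‖ ^ 2) ^ (-(((N : ℝ) + 2) / 2))) z
      _ = l⁻¹ ^ N * ∫ u : EuclideanSpace ℝ (Fin N), (1 + ‖u‖ ^ 2) ^ (-(((N : ℝ) + 2) / 2)) := by
          rw [Measure.integral_comp_smul volume
            (fun u : EuclideanSpace ℝ (Fin N) => (1 + ‖u‖ ^ 2) ^ (-(((N : ℝ) + 2) / 2))) l]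
          rw [finrank_euclideanSpace_fin, smul_eq_mul, abs_of_pos (by positivity), inv_pow]

private lemma aux15_quarter {D t c : ℝ} (hD : 0 < D) (h : D / 4 ≤ t) (hc : 0 ≤ c) :
    t ^ (-c) ≤ 4 ^ c * D ^ (-c) := by
  have h1 : t ^ (-c) ≤ (D / 4) ^ (-c) :=
    Real.rpow_le_rpow_of_nonpos (by positivity) h (neg_nonpos.2 hc)
  have h2 : (D / 4) ^ (-c) = 4 ^ c * D ^ (-c) := by
    rw [div_eq_mul_inv, Real.mul_rpow hD.le (by positivity), mul_comm]
    congr 1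
    rw [Real.inv_rpow (by norm_num : (0:ℝ) ≤ 4), Real.rpow_neg (by norm_num : (0:ℝ) ≤ 4), inv_inv]
  rw [h2] at h1; exact h1

private lemma aux15_gcont (z : EuclideanSpace ℝ (Fin N)) (l : ℝ) (c : ℝ) :
    Continuous (fun x : EuclideanSpace ℝ (Fin N) => (1 + l ^ 2 * ‖x - z‖ ^ 2) ^ (-c)) := by
  have h : Continuous fun x : EuclideanSpace ℝ (Fin N) => 1 + l ^ 2 * ‖x - z‖ ^ 2 := by
    fun_prop
  exact h.rpow_const fun x => Or.inl (by positivity)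

private lemma aux15_gint (hN : 3 ≤ N) (z₁ z₂ : EuclideanSpace ℝ (Fin N)) {l₁ l₂ : ℝ}
    (hl₁ : 0 < l₁) (hl₂ : 0 < l₂) :
    Integrable (fun x : EuclideanSpace ℝ (Fin N) =>
      (1 + l₁ ^ 2 * ‖x - z₁‖ ^ 2) ^ (-(((N : ℝ) + 2) / 2))
        * (1 + l₂ ^ 2 * ‖x - z₂‖ ^ 2) ^ (-(((N : ℝ) - 2) / 2))) := by
  have hN3 : (3:ℝ) ≤ (N:ℝ) := by exact_mod_cast hN
  apply ((aux15_scaled hN z₁ hl₁).1).mono'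
    (((aux15_gcont z₁ l₁ _).mul (aux15_gcont z₂ l₂ _)).aestronglyMeasurable)
  refine Filter.Eventually.of_forall fun x => ?_
  have h1 : (0:ℝ) < 1 + l₁ ^ 2 * ‖x - z₁‖ ^ 2 := by positivity
  have h2 : (1:ℝ) ≤ 1 + l₂ ^ 2 * ‖x - z₂‖ ^ 2 := by
    have : (0:ℝ) ≤ l₂ ^ 2 * ‖x - z₂‖ ^ 2 := by positivity
    linarith
  have hg1 : (0:ℝ) ≤ (1 + l₁ ^ 2 * ‖x - z₁‖ ^ 2) ^ (-(((N : ℝ) + 2) / 2)) :=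
    Real.rpow_nonneg h1.le _
  have hg2 : (1 + l₂ ^ 2 * ‖x - z₂‖ ^ 2) ^ (-(((N : ℝ) - 2) / 2)) ≤ 1 :=
    Real.rpow_le_one_of_one_le_of_nonpos h2 (by linarith)
  rw [Real.norm_eq_abs, Pi.mul_apply, abs_of_nonneg (mul_nonneg hg1 (Real.rpow_nonneg (by linarith) _))]
  calc (1 + l₁ ^ 2 * ‖x - z₁‖ ^ 2) ^ (-(((N : ℝ) + 2) / 2))
          * (1 + l₂ ^ 2 * ‖x - z₂‖ ^ 2) ^ (-(((N : ℝ) - 2) / 2))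
      ≤ (1 + l₁ ^ 2 * ‖x - z₁‖ ^ 2) ^ (-(((N : ℝ) + 2) / 2)) * 1 :=
        mul_le_mul_of_nonneg_left hg2 hg1
    _ = (1 + l₁ ^ 2 * ‖x - z₁‖ ^ 2) ^ (-(((N : ℝ) + 2) / 2)) := mul_one _

private lemma aux15_sq_rpow (hN : 3 ≤ N) {x : ℝ} (hx : 0 ≤ x) :
    (x ^ 2) ^ (((N : ℝ) + 2) / 2) = x ^ (N + 2) := by
  rw [← Real.rpow_natCast x 2, ← Real.rpow_mul hx, ← Real.rpow_natCast x (N + 2)]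
  congr 1; push_cast; ring

private lemma aux15_key1 (hN : 3 ≤ N) {l d : ℝ} (hl : 0 < l) (hd : 0 ≤ d) :
    (1 + l ^ 2 * d ^ 2) ^ (-(((N : ℝ) + 2) / 2)) * (d / 2) ^ N ≤ l⁻¹ ^ N := by
  have hN3 : (3:ℝ) ≤ (N:ℝ) := by exact_mod_cast hN
  have hA : (0:ℝ) < 1 + l ^ 2 * d ^ 2 := by positivity
  have hX : (0:ℝ) < (1 + l ^ 2 * d ^ 2) ^ (((N : ℝ) + 2) / 2) := Real.rpow_pos_of_pos hA _
  have key : (l * d / 2) ^ N ≤ (1 + l ^ 2 * d ^ 2) ^ (((N : ℝ) + 2) / 2) := by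
    have h1 : (l * d / 2) ^ N ≤ (l * d) ^ N :=
      pow_le_pow_left₀ (by positivity) (by nlinarith) N
    have h2 : (l * d) ^ N = ((l * d) ^ 2) ^ ((N : ℝ) / 2) := by
      rw [← Real.rpow_natCast (l * d) 2, ← Real.rpow_mul (by positivity),
        ← Real.rpow_natCast (l * d) N]
      congr 1; push_cast; ring
    have h3 : ((l * d) ^ 2) ^ ((N : ℝ) / 2) ≤ (1 + l ^ 2 * d ^ 2) ^ ((N : ℝ) / 2) :=
      Real.rpow_le_rpow (by positivity) (by nlinarith) (by positivity)
    have h4 : (1 + l ^ 2 * d ^ 2) ^ ((N : ℝ) / 2) ≤ (1 + l ^ 2 * d ^ 2) ^ (((N : ℝ) + 2) / 2) :=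
      Real.rpow_le_rpow_of_exponent_le (by nlinarith) (by linarith)
    rw [h2] at h1; linarith
  have hl' : l⁻¹ ^ N * (l * d / 2) ^ N = (d / 2) ^ N := by
    rw [← mul_pow]; congr 1; field_simp
  rw [Real.rpow_neg hA.le]
  calc ((1 + l ^ 2 * d ^ 2) ^ (((N : ℝ) + 2) / 2))⁻¹ * (d / 2) ^ N
      = ((1 + l ^ 2 * d ^ 2) ^ (((N : ℝ) + 2) / 2))⁻¹ * (l⁻¹ ^ N * (l * d / 2) ^ N) := by
        rw [hl']
    _ ≤ ((1 + l ^ 2 * d ^ 2) ^ (((N : ℝ) + 2) / 2))⁻¹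
          * (l⁻¹ ^ N * (1 + l ^ 2 * d ^ 2) ^ (((N : ℝ) + 2) / 2)) := by
        apply mul_le_mul_of_nonneg_left _ (by positivity)
        exact mul_le_mul_of_nonneg_left key (by positivity)
    _ = l⁻¹ ^ N := by field_simp

private lemma aux15_alg {A B P Q D2 c2 : ℝ} (hA : 0 < A) (hB : 0 < B) (hP : 0 < P)
    (hQ : 0 < Q) (h : P * (D2 * B) ≤ c2 * (Q * A)) :
    A⁻¹ * (D2 * Q⁻¹) ≤ c2 * (P⁻¹ * B⁻¹) := by
  apply le_of_mul_le_mul_right _ (show (0:ℝ) < A * Q * P * B by positivity)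
  calc (A⁻¹ * (D2 * Q⁻¹)) * (A * Q * P * B) = P * (D2 * B) := by field_simp
    _ ≤ c2 * (Q * A) := h
    _ = (c2 * (P⁻¹ * B⁻¹)) * (A * Q * P * B) := by field_simp

private lemma aux15_key2 (hN : 3 ≤ N) {l₁ l₂ d : ℝ} (hl₂ : 0 < l₂) (hle : l₂ ≤ l₁)
    (hd : 1 ≤ l₂ * d) :
    (1 + l₁ ^ 2 * d ^ 2) ^ (-(((N : ℝ) + 2) / 2)) * ((1 + l₂ ^ 2 * d ^ 2) ^ 2 * l₂⁻¹ ^ N)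
      ≤ 2 ^ (((N : ℝ) + 2) / 2)
        * (l₁⁻¹ ^ N * (1 + l₂ ^ 2 * d ^ 2) ^ (-(((N : ℝ) - 2) / 2))) := by
  have hN3 : (3:ℝ) ≤ (N:ℝ) := by exact_mod_cast hN
  have hl₁ : 0 < l₁ := lt_of_lt_of_le hl₂ hle
  have hd0 : 0 < d := by nlinarith
  have hD : (0:ℝ) < 1 + l₂ ^ 2 * d ^ 2 := by positivity
  have hA : (0:ℝ) < 1 + l₁ ^ 2 * d ^ 2 := by positivity
  -- main claim
  have claim : l₁ ^ N * ((1 + l₂ ^ 2 * d ^ 2) ^ 2 * (1 + l₂ ^ 2 * d ^ 2) ^ (((N : ℝ) - 2) / 2))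
      ≤ 2 ^ (((N : ℝ) + 2) / 2) * (l₂ ^ N * (1 + l₁ ^ 2 * d ^ 2) ^ (((N : ℝ) + 2) / 2)) := by
    have hDa : (1 + l₂ ^ 2 * d ^ 2) ^ 2 * (1 + l₂ ^ 2 * d ^ 2) ^ (((N : ℝ) - 2) / 2)
        = (1 + l₂ ^ 2 * d ^ 2) ^ (((N : ℝ) + 2) / 2) := by
      rw [← Real.rpow_natCast (1 + l₂ ^ 2 * d ^ 2) 2, ← Real.rpow_add hD]
      congr 1; push_cast; ring
    have hD2 : 1 + l₂ ^ 2 * d ^ 2 ≤ 2 * (l₂ * d) ^ 2 := by nlinarith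
    have hDb : (1 + l₂ ^ 2 * d ^ 2) ^ (((N : ℝ) + 2) / 2)
        ≤ 2 ^ (((N : ℝ) + 2) / 2) * ((l₂ * d) ^ 2) ^ (((N : ℝ) + 2) / 2) := by
      rw [← Real.mul_rpow (by norm_num) (by positivity)]
      exact Real.rpow_le_rpow hD.le hD2 (by positivity)
    have hAb : ((l₁ * d) ^ 2) ^ (((N : ℝ) + 2) / 2) ≤ (1 + l₁ ^ 2 * d ^ 2) ^ (((N : ℝ) + 2) / 2) :=
      Real.rpow_le_rpow (by positivity) (by nlinarith) (by positivity)
    have hmid : l₁ ^ N * (l₂ * d) ^ (N + 2) ≤ l₂ ^ N * (l₁ * d) ^ (N + 2) := by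
      have h22 : l₂ ^ 2 ≤ l₁ ^ 2 := by nlinarith
      calc l₁ ^ N * (l₂ * d) ^ (N + 2) = (l₁ ^ N * l₂ ^ N * d ^ (N + 2)) * l₂ ^ 2 := by
            rw [mul_pow, pow_add]; ring
        _ ≤ (l₁ ^ N * l₂ ^ N * d ^ (N + 2)) * l₁ ^ 2 :=
            mul_le_mul_of_nonneg_left h22 (by positivity)
        _ = l₂ ^ N * (l₁ * d) ^ (N + 2) := by rw [mul_pow, pow_add]; ring
    calc l₁ ^ N * ((1 + l₂ ^ 2 * d ^ 2) ^ 2 * (1 + l₂ ^ 2 * d ^ 2) ^ (((N : ℝ) - 2) / 2))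
        = l₁ ^ N * (1 + l₂ ^ 2 * d ^ 2) ^ (((N : ℝ) + 2) / 2) := by rw [hDa]
      _ ≤ l₁ ^ N * (2 ^ (((N : ℝ) + 2) / 2) * ((l₂ * d) ^ 2) ^ (((N : ℝ) + 2) / 2)) :=
          mul_le_mul_of_nonneg_left hDb (by positivity)
      _ = 2 ^ (((N : ℝ) + 2) / 2) * (l₁ ^ N * (l₂ * d) ^ (N + 2)) := by
          rw [aux15_sq_rpow hN (by positivity)]; ring
      _ ≤ 2 ^ (((N : ℝ) + 2) / 2) * (l₂ ^ N * (l₁ * d) ^ (N + 2)) :=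
          mul_le_mul_of_nonneg_left hmid (by positivity)
      _ = 2 ^ (((N : ℝ) + 2) / 2) * (l₂ ^ N * ((l₁ * d) ^ 2) ^ (((N : ℝ) + 2) / 2)) := by
          rw [aux15_sq_rpow hN (by positivity)]
      _ ≤ 2 ^ (((N : ℝ) + 2) / 2) * (l₂ ^ N * (1 + l₁ ^ 2 * d ^ 2) ^ (((N : ℝ) + 2) / 2)) := by
          apply mul_le_mul_of_nonneg_left _ (by positivity)
          exact mul_le_mul_of_nonneg_left hAb (by positivity)
  rw [Real.rpow_neg hA.le, Real.rpow_neg hD.le, inv_pow, inv_pow]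
  exact aux15_alg (by positivity) (by positivity) (by positivity) (by positivity) claim

private lemma aux15_ball_vol (z : EuclideanSpace ℝ (Fin N)) {r : ℝ} (hr : 0 < r) :
    (volume (ball z r)).toReal
      = r ^ N * (volume (ball (0 : EuclideanSpace ℝ (Fin N)) 1)).toReal := by
  rw [Measure.addHaar_ball_of_pos volume z hr, finrank_euclideanSpace_fin, ENNReal.toReal_mul,
    ENNReal.toReal_ofReal (by positivity)]

set_option maxHeartbeats 2000000 in
private lemma aux15_upper (hN : 3 ≤ N) (z₁ z₂ : EuclideanSpace ℝ (Fin N)) {l₁ l₂ : ℝ}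
    (hl₂ : 0 < l₂) (hle : l₂ ≤ l₁) :
    (∫ x : EuclideanSpace ℝ (Fin N),
        (1 + l₁ ^ 2 * ‖x - z₁‖ ^ 2) ^ (-(((N : ℝ) + 2) / 2))
          * (1 + l₂ ^ 2 * ‖x - z₂‖ ^ 2) ^ (-(((N : ℝ) - 2) / 2)))
      ≤ (4 ^ (((N : ℝ) - 2) / 2) * (∫ u : EuclideanSpace ℝ (Fin N), (1 + ‖u‖ ^ 2) ^ (-(((N : ℝ) + 2) / 2)))
          + 4 ^ (((N : ℝ) + 2) / 2) * (volume (ball (0 : EuclideanSpace ℝ (Fin N)) 1)).toReal * 2 ^ (((N : ℝ) - 2) / 2)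
          + 4 ^ (((N : ℝ) + 2) / 2) * (∫ u : EuclideanSpace ℝ (Fin N), (1 + ‖u‖ ^ 2) ^ (-(((N : ℝ) + 2) / 2))) * 2 ^ (((N : ℝ) + 2) / 2))
        * (l₁⁻¹ ^ N * (1 + l₂ ^ 2 * dist z₁ z₂ ^ 2) ^ (-(((N : ℝ) - 2) / 2))) := by
  have hN3 : (3:ℝ) ≤ (N:ℝ) := by exact_mod_cast hN
  have hl₁ : 0 < l₁ := lt_of_lt_of_le hl₂ hle
  set a : ℝ := ((N : ℝ) + 2) / 2 with ha_def
  set b : ℝ := ((N : ℝ) - 2) / 2 with hb_def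
  have ha0 : 0 < a := by rw [ha_def]; linarith
  have hb0 : 0 < b := by rw [hb_def]; linarith
  set J : ℝ := ∫ u : EuclideanSpace ℝ (Fin N), (1 + ‖u‖ ^ 2) ^ (-a) with hJ_def
  have hJ0 : 0 ≤ J := integral_nonneg fun u => Real.rpow_nonneg (by positivity) _
  set W : ℝ := (volume (ball (0 : EuclideanSpace ℝ (Fin N)) 1)).toReal with hW_def
  have hW0 : 0 ≤ W := ENNReal.toReal_nonneg
  set d : ℝ := dist z₁ z₂ with hd_def
  have hd0 : 0 ≤ d := dist_nonneg
  set D : ℝ := 1 + l₂ ^ 2 * d ^ 2 with hD_def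
  have hD0 : 0 < D := by rw [hD_def]; positivity
  have hA0 : (0:ℝ) < 1 + l₁ ^ 2 * d ^ 2 := by positivity
  have hgint := aux15_gint hN z₁ z₂ hl₁ hl₂
  have hg1int := (aux15_scaled hN z₁ hl₁).1
  have hg1nonneg : ∀ x : EuclideanSpace ℝ (Fin N),
      (0:ℝ) ≤ (1 + l₁ ^ 2 * ‖x - z₁‖ ^ 2) ^ (-a) := fun x => Real.rpow_nonneg (by positivity) _
  have hg2nonneg : ∀ x : EuclideanSpace ℝ (Fin N),
      (0:ℝ) ≤ (1 + l₂ ^ 2 * ‖x - z₂‖ ^ 2) ^ (-b) := fun x => Real.rpow_nonneg (by positivity) _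
  have hsplit := integral_add_compl (measurableSet_ball :
      MeasurableSet (ball z₂ (d / 2))) hgint
  -- complement part
  have hcompl : (∫ x in (ball z₂ (d / 2))ᶜ,
      (1 + l₁ ^ 2 * ‖x - z₁‖ ^ 2) ^ (-a) * (1 + l₂ ^ 2 * ‖x - z₂‖ ^ 2) ^ (-b))
      ≤ 4 ^ b * J * (l₁⁻¹ ^ N * D ^ (-b)) := by
    have hpt : ∀ x ∈ (ball z₂ (d / 2))ᶜ,
        (1 + l₁ ^ 2 * ‖x - z₁‖ ^ 2) ^ (-a) * (1 + l₂ ^ 2 * ‖x - z₂‖ ^ 2) ^ (-b)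
          ≤ (4 ^ b * D ^ (-b)) * (1 + l₁ ^ 2 * ‖x - z₁‖ ^ 2) ^ (-a) := by
      intro x hx
      have hxd : d / 2 ≤ dist x z₂ := not_lt.1 (fun h => hx (mem_ball.2 h))
      have hdist : d / 2 ≤ ‖x - z₂‖ := by rwa [← dist_eq_norm]
      have hsq : (d / 2) ^ 2 ≤ ‖x - z₂‖ ^ 2 := by
        apply pow_le_pow_left₀ (by positivity) hdist
      have hq : D / 4 ≤ 1 + l₂ ^ 2 * ‖x - z₂‖ ^ 2 := by
        rw [hD_def]; nlinarith [sq_nonneg l₂, sq_nonneg d]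
      have h2 := aux15_quarter hD0 hq hb0.le
      calc (1 + l₁ ^ 2 * ‖x - z₁‖ ^ 2) ^ (-a) * (1 + l₂ ^ 2 * ‖x - z₂‖ ^ 2) ^ (-b)
          ≤ (1 + l₁ ^ 2 * ‖x - z₁‖ ^ 2) ^ (-a) * (4 ^ b * D ^ (-b)) :=
            mul_le_mul_of_nonneg_left h2 (hg1nonneg x)
        _ = (4 ^ b * D ^ (-b)) * (1 + l₁ ^ 2 * ‖x - z₁‖ ^ 2) ^ (-a) := mul_comm _ _
    calc (∫ x in (ball z₂ (d / 2))ᶜ,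
          (1 + l₁ ^ 2 * ‖x - z₁‖ ^ 2) ^ (-a) * (1 + l₂ ^ 2 * ‖x - z₂‖ ^ 2) ^ (-b))
        ≤ ∫ x in (ball z₂ (d / 2))ᶜ,
            (4 ^ b * D ^ (-b)) * (1 + l₁ ^ 2 * ‖x - z₁‖ ^ 2) ^ (-a) :=
          setIntegral_mono_on hgint.integrableOn
            ((hg1int.const_mul _).integrableOn) measurableSet_ball.compl hpt
      _ = (4 ^ b * D ^ (-b)) * ∫ x in (ball z₂ (d / 2))ᶜ,
            (1 + l₁ ^ 2 * ‖x - z₁‖ ^ 2) ^ (-a) := integral_const_mul _ _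
      _ ≤ (4 ^ b * D ^ (-b)) * ∫ x : EuclideanSpace ℝ (Fin N),
            (1 + l₁ ^ 2 * ‖x - z₁‖ ^ 2) ^ (-a) := by
          apply mul_le_mul_of_nonneg_left _ (by positivity)
          exact setIntegral_le_integral hg1int
            (Filter.Eventually.of_forall fun x => hg1nonneg x)
      _ = (4 ^ b * D ^ (-b)) * (l₁⁻¹ ^ N * J) := by
          rw [(aux15_scaled hN z₁ hl₁).2]
      _ = 4 ^ b * J * (l₁⁻¹ ^ N * D ^ (-b)) := by ring
  -- ball part
  have hball : (∫ x in ball z₂ (d / 2),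
      (1 + l₁ ^ 2 * ‖x - z₁‖ ^ 2) ^ (-a) * (1 + l₂ ^ 2 * ‖x - z₂‖ ^ 2) ^ (-b))
      ≤ (4 ^ a * W * 2 ^ b + 4 ^ a * J * 2 ^ a) * (l₁⁻¹ ^ N * D ^ (-b)) := by
    have hrhs0 : (0:ℝ) ≤ (4 ^ a * W * 2 ^ b + 4 ^ a * J * 2 ^ a) * (l₁⁻¹ ^ N * D ^ (-b)) := by
      apply mul_nonneg _ (by positivity)
      have t1 : (0:ℝ) ≤ 4 ^ a * W * 2 ^ b :=
        mul_nonneg (mul_nonneg (Real.rpow_nonneg (by norm_num) _) hW0)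
          (Real.rpow_nonneg (by norm_num) _)
      have t2 : (0:ℝ) ≤ 4 ^ a * J * 2 ^ a :=
        mul_nonneg (mul_nonneg (Real.rpow_nonneg (by norm_num) _) hJ0)
          (Real.rpow_nonneg (by norm_num) _)
      linarith
    rcases hd0.eq_or_lt with hdz | hdz
    · have hempty : ball z₂ (d / 2) = ∅ := by
        rw [← hdz]; norm_num
      rw [hempty, Measure.restrict_empty, integral_zero_measure]
      exact hrhs0
    -- 0 < d
    have hptball : ∀ x ∈ ball z₂ (d / 2),
        (1 + l₁ ^ 2 * ‖x - z₁‖ ^ 2) ^ (-a) * (1 + l₂ ^ 2 * ‖x - z₂‖ ^ 2) ^ (-b)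
          ≤ (4 ^ a * (1 + l₁ ^ 2 * d ^ 2) ^ (-a)) * (1 + l₂ ^ 2 * ‖x - z₂‖ ^ 2) ^ (-b) := by
      intro x hx
      have hxz : dist x z₂ < d / 2 := mem_ball.1 hx
      have htri : d ≤ dist z₁ x + dist x z₂ := by
        rw [hd_def]; exact dist_triangle z₁ x z₂
      have hfar : d / 2 ≤ ‖x - z₁‖ := by
        rw [← dist_eq_norm, dist_comm]; linarith
      have hsq : (d / 2) ^ 2 ≤ ‖x - z₁‖ ^ 2 := pow_le_pow_left₀ (by positivity) hfar 2
      have hq : (1 + l₁ ^ 2 * d ^ 2) / 4 ≤ 1 + l₁ ^ 2 * ‖x - z₁‖ ^ 2 := by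
        nlinarith [sq_nonneg l₁, sq_nonneg d]
      have h1 := aux15_quarter hA0 hq ha0.le
      exact mul_le_mul_of_nonneg_right h1 (hg2nonneg x)
    have hg2ball : IntegrableOn
        (fun x : EuclideanSpace ℝ (Fin N) => (1 + l₂ ^ 2 * ‖x - z₂‖ ^ 2) ^ (-b))
        (ball z₂ (d / 2)) volume := by
      apply Measure.integrableOn_of_bounded (M := 1) measure_ball_lt_top.ne
        (aux15_gcont z₂ l₂ b).aestronglyMeasurable
      refine Filter.Eventually.of_forall fun x => ?_
      rw [Real.norm_eq_abs, abs_of_nonneg (hg2nonneg x)]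
      apply Real.rpow_le_one_of_one_le_of_nonpos _ (by linarith)
      have : (0:ℝ) ≤ l₂ ^ 2 * ‖x - z₂‖ ^ 2 := by positivity
      linarith
    have hstep : (∫ x in ball z₂ (d / 2),
        (1 + l₁ ^ 2 * ‖x - z₁‖ ^ 2) ^ (-a) * (1 + l₂ ^ 2 * ‖x - z₂‖ ^ 2) ^ (-b))
        ≤ (4 ^ a * (1 + l₁ ^ 2 * d ^ 2) ^ (-a)) * ∫ x in ball z₂ (d / 2),
            (1 + l₂ ^ 2 * ‖x - z₂‖ ^ 2) ^ (-b) := by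
      rw [← integral_const_mul]
      exact setIntegral_mono_on hgint.integrableOn (hg2ball.const_mul _)
        measurableSet_ball hptball
    have h4a0 : (0:ℝ) ≤ 4 ^ a * (1 + l₁ ^ 2 * d ^ 2) ^ (-a) :=
      mul_nonneg (Real.rpow_nonneg (by norm_num) _) (Real.rpow_nonneg hA0.le _)
    by_cases hc : l₂ * d ≤ 1
    · -- concentrated case
      have hvol : (∫ x in ball z₂ (d / 2), (1 + l₂ ^ 2 * ‖x - z₂‖ ^ 2) ^ (-b))
          ≤ (d / 2) ^ N * W := by
        have h1 : (∫ x in ball z₂ (d / 2), (1 + l₂ ^ 2 * ‖x - z₂‖ ^ 2) ^ (-b))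
            ≤ ∫ _x in ball z₂ (d / 2), (1:ℝ) := by
          apply setIntegral_mono_on hg2ball
            (integrableOn_const measure_ball_lt_top.ne) measurableSet_ball
          intro x _
          apply Real.rpow_le_one_of_one_le_of_nonpos _ (by linarith)
          have : (0:ℝ) ≤ l₂ ^ 2 * ‖x - z₂‖ ^ 2 := by positivity
          linarith
        rw [setIntegral_const, smul_eq_mul, mul_one] at h1
        rw [measureReal_def, aux15_ball_vol z₂ (by linarith : (0:ℝ) < d / 2)] at h1
        exact h1
      have hkey1 : (1 + l₁ ^ 2 * d ^ 2) ^ (-a) * (d / 2) ^ N ≤ l₁⁻¹ ^ N :=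
        aux15_key1 hN hl₁ hd0
      have hDle2 : D ≤ 2 := by
        rw [hD_def]
        nlinarith [hc, mul_nonneg hl₂.le hd0, mul_pow l₂ d 2]
      have h2b : (1:ℝ) ≤ 2 ^ b * D ^ (-b) := by
        have e1 : (2:ℝ) ^ b * 2 ^ (-b) = 1 := by
          rw [← Real.rpow_add (by norm_num : (0:ℝ) < 2), add_neg_cancel, Real.rpow_zero]
        have e2 : (2:ℝ) ^ (-b) ≤ D ^ (-b) :=
          Real.rpow_le_rpow_of_nonpos hD0 hDle2 (neg_nonpos.2 hb0.le)
        calc (1:ℝ) = 2 ^ b * 2 ^ (-b) := e1.symm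
          _ ≤ 2 ^ b * D ^ (-b) :=
            mul_le_mul_of_nonneg_left e2 (Real.rpow_nonneg (by norm_num) _)
      calc (∫ x in ball z₂ (d / 2),
            (1 + l₁ ^ 2 * ‖x - z₁‖ ^ 2) ^ (-a) * (1 + l₂ ^ 2 * ‖x - z₂‖ ^ 2) ^ (-b))
          ≤ (4 ^ a * (1 + l₁ ^ 2 * d ^ 2) ^ (-a)) * ∫ x in ball z₂ (d / 2),
              (1 + l₂ ^ 2 * ‖x - z₂‖ ^ 2) ^ (-b) := hstep
        _ ≤ (4 ^ a * (1 + l₁ ^ 2 * d ^ 2) ^ (-a)) * ((d / 2) ^ N * W) := by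
            apply mul_le_mul_of_nonneg_left hvol h4a0
        _ = (4 ^ a * W) * ((1 + l₁ ^ 2 * d ^ 2) ^ (-a) * (d / 2) ^ N) := by ring
        _ ≤ (4 ^ a * W) * l₁⁻¹ ^ N := by
            apply mul_le_mul_of_nonneg_left hkey1
              (mul_nonneg (Real.rpow_nonneg (by norm_num) _) hW0)
        _ = ((4 ^ a * W) * l₁⁻¹ ^ N) * 1 := by ring
        _ ≤ ((4 ^ a * W) * l₁⁻¹ ^ N) * (2 ^ b * D ^ (-b)) := by
            apply mul_le_mul_of_nonneg_left h2b
            exact mul_nonneg (mul_nonneg (Real.rpow_nonneg (by norm_num) _) hW0)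
              (by positivity)
        _ = (4 ^ a * W * 2 ^ b) * (l₁⁻¹ ^ N * D ^ (-b)) := by ring
        _ ≤ (4 ^ a * W * 2 ^ b + 4 ^ a * J * 2 ^ a) * (l₁⁻¹ ^ N * D ^ (-b)) := by
            apply mul_le_mul_of_nonneg_right _ (by positivity)
            have t2 : (0:ℝ) ≤ 4 ^ a * J * 2 ^ a :=
              mul_nonneg (mul_nonneg (Real.rpow_nonneg (by norm_num) _) hJ0)
                (Real.rpow_nonneg (by norm_num) _)
            linarith
    · -- spread case : 1 < l₂ * d
      push_neg at hc
      have hpt3 : ∀ x ∈ ball z₂ (d / 2),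
          (1 + l₂ ^ 2 * ‖x - z₂‖ ^ 2) ^ (-b)
            ≤ D ^ 2 * (1 + l₂ ^ 2 * ‖x - z₂‖ ^ 2) ^ (-a) := by
        intro x hx
        have hxz : dist x z₂ < d / 2 := mem_ball.1 hx
        have hr : ‖x - z₂‖ ≤ d := by
          rw [← dist_eq_norm]; linarith
        have ht2pos : (0:ℝ) < 1 + l₂ ^ 2 * ‖x - z₂‖ ^ 2 := by positivity
        have ht2D : 1 + l₂ ^ 2 * ‖x - z₂‖ ^ 2 ≤ D := by
          rw [hD_def]
          have : ‖x - z₂‖ ^ 2 ≤ d ^ 2 := pow_le_pow_left₀ (norm_nonneg _) hr 2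
          nlinarith [sq_nonneg l₂]
        have hsplit2 : (1 + l₂ ^ 2 * ‖x - z₂‖ ^ 2) ^ (-b)
            = (1 + l₂ ^ 2 * ‖x - z₂‖ ^ 2) ^ 2 * (1 + l₂ ^ 2 * ‖x - z₂‖ ^ 2) ^ (-a) := by
          rw [← Real.rpow_natCast (1 + l₂ ^ 2 * ‖x - z₂‖ ^ 2) 2, ← Real.rpow_add ht2pos]
          congr 1
          rw [hb_def, ha_def]; push_cast; ring
        rw [hsplit2]
        apply mul_le_mul_of_nonneg_right _ (Real.rpow_nonneg ht2pos.le _)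
        apply pow_le_pow_left₀ ht2pos.le ht2D
      have hint2 : (∫ x in ball z₂ (d / 2), (1 + l₂ ^ 2 * ‖x - z₂‖ ^ 2) ^ (-b))
          ≤ D ^ 2 * (l₂⁻¹ ^ N * J) := by
        calc (∫ x in ball z₂ (d / 2), (1 + l₂ ^ 2 * ‖x - z₂‖ ^ 2) ^ (-b))
            ≤ ∫ x in ball z₂ (d / 2), D ^ 2 * (1 + l₂ ^ 2 * ‖x - z₂‖ ^ 2) ^ (-a) :=
              setIntegral_mono_on hg2ball
                (((aux15_scaled hN z₂ hl₂).1.const_mul _).integrableOn)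
                measurableSet_ball hpt3
          _ = D ^ 2 * ∫ x in ball z₂ (d / 2), (1 + l₂ ^ 2 * ‖x - z₂‖ ^ 2) ^ (-a) :=
              integral_const_mul _ _
          _ ≤ D ^ 2 * ∫ x : EuclideanSpace ℝ (Fin N), (1 + l₂ ^ 2 * ‖x - z₂‖ ^ 2) ^ (-a) := by
              apply mul_le_mul_of_nonneg_left _ (by positivity)
              exact setIntegral_le_integral (aux15_scaled hN z₂ hl₂).1
                (Filter.Eventually.of_forall fun x => Real.rpow_nonneg (by positivity) _)
          _ = D ^ 2 * (l₂⁻¹ ^ N * J) := by rw [(aux15_scaled hN z₂ hl₂).2]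
      have hkey2 := aux15_key2 hN hl₂ hle hc.le
      calc (∫ x in ball z₂ (d / 2),
            (1 + l₁ ^ 2 * ‖x - z₁‖ ^ 2) ^ (-a) * (1 + l₂ ^ 2 * ‖x - z₂‖ ^ 2) ^ (-b))
          ≤ (4 ^ a * (1 + l₁ ^ 2 * d ^ 2) ^ (-a)) * ∫ x in ball z₂ (d / 2),
              (1 + l₂ ^ 2 * ‖x - z₂‖ ^ 2) ^ (-b) := hstep
        _ ≤ (4 ^ a * (1 + l₁ ^ 2 * d ^ 2) ^ (-a)) * (D ^ 2 * (l₂⁻¹ ^ N * J)) := by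
            apply mul_le_mul_of_nonneg_left hint2 h4a0
        _ = (4 ^ a * J) * ((1 + l₁ ^ 2 * d ^ 2) ^ (-a) * (D ^ 2 * l₂⁻¹ ^ N)) := by ring
        _ ≤ (4 ^ a * J) * (2 ^ a * (l₁⁻¹ ^ N * D ^ (-b))) := by
            apply mul_le_mul_of_nonneg_left hkey2
              (mul_nonneg (Real.rpow_nonneg (by norm_num) _) hJ0)
        _ = (4 ^ a * J * 2 ^ a) * (l₁⁻¹ ^ N * D ^ (-b)) := by ring
        _ ≤ (4 ^ a * W * 2 ^ b + 4 ^ a * J * 2 ^ a) * (l₁⁻¹ ^ N * D ^ (-b)) := by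
            apply mul_le_mul_of_nonneg_right _ (by positivity)
            have t1 : (0:ℝ) ≤ 4 ^ a * W * 2 ^ b :=
              mul_nonneg (mul_nonneg (Real.rpow_nonneg (by norm_num) _) hW0)
                (Real.rpow_nonneg (by norm_num) _)
            linarith
  calc (∫ x : EuclideanSpace ℝ (Fin N),
        (1 + l₁ ^ 2 * ‖x - z₁‖ ^ 2) ^ (-a) * (1 + l₂ ^ 2 * ‖x - z₂‖ ^ 2) ^ (-b))
      = (∫ x in ball z₂ (d / 2),
          (1 + l₁ ^ 2 * ‖x - z₁‖ ^ 2) ^ (-a) * (1 + l₂ ^ 2 * ‖x - z₂‖ ^ 2) ^ (-b))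
        + ∫ x in (ball z₂ (d / 2))ᶜ,
            (1 + l₁ ^ 2 * ‖x - z₁‖ ^ 2) ^ (-a) * (1 + l₂ ^ 2 * ‖x - z₂‖ ^ 2) ^ (-b) :=
      hsplit.symm
    _ ≤ (4 ^ a * W * 2 ^ b + 4 ^ a * J * 2 ^ a) * (l₁⁻¹ ^ N * D ^ (-b))
        + 4 ^ b * J * (l₁⁻¹ ^ N * D ^ (-b)) := add_le_add hball hcompl
    _ = (4 ^ b * J + 4 ^ a * W * 2 ^ b + 4 ^ a * J * 2 ^ a) * (l₁⁻¹ ^ N * D ^ (-b)) := by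
        ring

set_option maxHeartbeats 2000000 in
private lemma aux15_lower (hN : 3 ≤ N) (z₁ z₂ : EuclideanSpace ℝ (Fin N)) {l₁ l₂ : ℝ}
    (hl₂ : 0 < l₂) (hle : l₂ ≤ l₁) :
    (2 ^ (-(((N : ℝ) + 2) / 2)) * (3 ^ (-(((N : ℝ) - 2) / 2))
        * (1 + l₂ ^ 2 * dist z₁ z₂ ^ 2) ^ (-(((N : ℝ) - 2) / 2))))
      * (l₁⁻¹ ^ N * (volume (ball (0 : EuclideanSpace ℝ (Fin N)) 1)).toReal)
      ≤ ∫ x in ball z₁ l₁⁻¹,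
          (1 + l₁ ^ 2 * ‖x - z₁‖ ^ 2) ^ (-(((N : ℝ) + 2) / 2))
            * (1 + l₂ ^ 2 * ‖x - z₂‖ ^ 2) ^ (-(((N : ℝ) - 2) / 2)) := by
  have hN3 : (3:ℝ) ≤ (N:ℝ) := by exact_mod_cast hN
  have hl₁ : 0 < l₁ := lt_of_lt_of_le hl₂ hle
  set a : ℝ := ((N : ℝ) + 2) / 2 with ha_def
  set b : ℝ := ((N : ℝ) - 2) / 2 with hb_def
  have ha0 : 0 < a := by rw [ha_def]; linarith
  have hb0 : 0 < b := by rw [hb_def]; linarith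
  set d : ℝ := dist z₁ z₂ with hd_def
  have hd0 : 0 ≤ d := dist_nonneg
  set D : ℝ := 1 + l₂ ^ 2 * d ^ 2 with hD_def
  have hD0 : 0 < D := by rw [hD_def]; positivity
  have hgint := aux15_gint hN z₁ z₂ hl₁ hl₂
  have hpt : ∀ x ∈ ball z₁ l₁⁻¹,
      2 ^ (-a) * (3 ^ (-b) * D ^ (-b))
        ≤ (1 + l₁ ^ 2 * ‖x - z₁‖ ^ 2) ^ (-a) * (1 + l₂ ^ 2 * ‖x - z₂‖ ^ 2) ^ (-b) := by
    intro x hx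
    have hr1 : ‖x - z₁‖ < l₁⁻¹ := by rw [← dist_eq_norm]; exact mem_ball.1 hx
    have hlr1 : l₁ * ‖x - z₁‖ ≤ 1 := by
      have := mul_le_mul_of_nonneg_left hr1.le hl₁.le
      rwa [mul_inv_cancel₀ hl₁.ne'] at this
    have ht1 : 1 + l₁ ^ 2 * ‖x - z₁‖ ^ 2 ≤ 2 := by
      nlinarith [norm_nonneg (x - z₁), mul_pow l₁ ‖x - z₁‖ 2,
        mul_nonneg hl₁.le (norm_nonneg (x - z₁))]
    have hg1 : (2:ℝ) ^ (-a) ≤ (1 + l₁ ^ 2 * ‖x - z₁‖ ^ 2) ^ (-a) :=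
      Real.rpow_le_rpow_of_nonpos (by positivity) ht1 (neg_nonpos.2 ha0.le)
    have hr2 : ‖x - z₂‖ ≤ l₁⁻¹ + d := by
      rw [← dist_eq_norm]
      calc dist x z₂ ≤ dist x z₁ + dist z₁ z₂ := dist_triangle x z₁ z₂
        _ ≤ l₁⁻¹ + d := by
            rw [hd_def]; exact add_le_add (mem_ball.1 hx).le le_rfl
    have hl21 : l₂ * l₁⁻¹ ≤ 1 := by
      rw [← div_eq_mul_inv]
      exact div_le_one_of_le₀ hle hl₁.le
    have hlr2 : l₂ * ‖x - z₂‖ ≤ 1 + l₂ * d := by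
      calc l₂ * ‖x - z₂‖ ≤ l₂ * (l₁⁻¹ + d) := mul_le_mul_of_nonneg_left hr2 hl₂.le
        _ = l₂ * l₁⁻¹ + l₂ * d := by ring
        _ ≤ 1 + l₂ * d := by linarith
    have ht2 : 1 + l₂ ^ 2 * ‖x - z₂‖ ^ 2 ≤ 3 * D := by
      rw [hD_def]
      have hsq : (l₂ * ‖x - z₂‖) ^ 2 ≤ (1 + l₂ * d) ^ 2 :=
        pow_le_pow_left₀ (mul_nonneg hl₂.le (norm_nonneg _)) hlr2 2
      nlinarith [hsq, mul_pow l₂ ‖x - z₂‖ 2, mul_pow l₂ d 2,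
        sq_nonneg (1 - l₂ * d), mul_nonneg hl₂.le hd0]
    have hg2 : (3:ℝ) ^ (-b) * D ^ (-b) ≤ (1 + l₂ ^ 2 * ‖x - z₂‖ ^ 2) ^ (-b) := by
      have h3D := Real.rpow_le_rpow_of_nonpos
        (show (0:ℝ) < 1 + l₂ ^ 2 * ‖x - z₂‖ ^ 2 by positivity) ht2 (neg_nonpos.2 hb0.le)
      rwa [Real.mul_rpow (by norm_num) hD0.le] at h3D
    exact mul_le_mul hg1 hg2
      (mul_nonneg (Real.rpow_nonneg (by norm_num) _)
        (Real.rpow_nonneg hD0.le _))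
      (Real.rpow_nonneg (by positivity) _)
  have hmain := setIntegral_ge_of_const_le_real measurableSet_ball measure_ball_lt_top.ne hpt
    hgint.integrableOn
  rwa [measureReal_def, aux15_ball_vol z₁ (inv_pos.2 hl₁)] at hmain

private lemma aux15_prod (hN : 3 ≤ N) (z₁ z₂ : EuclideanSpace ℝ (Fin N)) {l₁ l₂ : ℝ}
    (hl₁ : 0 < l₁) (hl₂ : 0 < l₂) (x : EuclideanSpace ℝ (Fin N)) :
    bubble15 N z₁ l₁ x ^ (((N : ℝ) + 2) / ((N : ℝ) - 2)) * bubble15 N z₂ l₂ x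
      = ((((N : ℝ) * ((N : ℝ) - 2)) ^ (((N : ℝ) - 2) / 4)) ^ (((N : ℝ) + 2) / ((N : ℝ) - 2))
          * (((N : ℝ) * ((N : ℝ) - 2)) ^ (((N : ℝ) - 2) / 4))
          * l₁ ^ (((N : ℝ) + 2) / 2) * l₂ ^ (((N : ℝ) - 2) / 2))
        * ((1 + l₁ ^ 2 * ‖x - z₁‖ ^ 2) ^ (-(((N : ℝ) + 2) / 2))
            * (1 + l₂ ^ 2 * ‖x - z₂‖ ^ 2) ^ (-(((N : ℝ) - 2) / 2))) := by
  have hN3 : (3:ℝ) ≤ (N:ℝ) := by exact_mod_cast hN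
  have hN2 : (0:ℝ) < (N : ℝ) - 2 := by linarith
  have hK0 : (0:ℝ) < (N : ℝ) * ((N : ℝ) - 2) := by nlinarith
  have ht1 : (0:ℝ) < 1 + l₁ ^ 2 * ‖x - z₁‖ ^ 2 := by positivity
  rw [bubble15, bubble15]
  rw [Real.mul_rpow
      (mul_nonneg (Real.rpow_nonneg hK0.le _) (Real.rpow_nonneg hl₁.le _))
      (Real.rpow_nonneg ht1.le _),
    Real.mul_rpow (Real.rpow_nonneg hK0.le _) (Real.rpow_nonneg hl₁.le _),
    ← Real.rpow_mul hl₁.le, ← Real.rpow_mul ht1.le]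
  rw [show ((N : ℝ) - 2) / 2 * (((N : ℝ) + 2) / ((N : ℝ) - 2)) = ((N : ℝ) + 2) / 2 by
    field_simp]
  rw [show -(((N : ℝ) - 2) / 2) * (((N : ℝ) + 2) / ((N : ℝ) - 2)) = -(((N : ℝ) + 2) / 2) by
    field_simp]
  ring


set_option maxHeartbeats 2000000 in
/-- For bubbles `U₁ = U[z₁,λ₁]`, `U₂ = U[z₂,λ₂]` with `λ₁ ≥ λ₂ > 0`, the interaction
integral `∫_{ℝ^N} U₁^p U₂` is comparable to `∫_{B(z₁,λ₁⁻¹)} U₁^p U₂` with constants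
depending only on `N`. -/
theorem stmt_15 (N : ℕ) (hN : 3 ≤ N) :
    ∃ c C : ℝ, 0 < c ∧ 0 < C ∧
      ∀ (z₁ z₂ : EuclideanSpace ℝ (Fin N)) (l₁ l₂ : ℝ), 0 < l₂ → l₂ ≤ l₁ →
        c * (∫ x in ball z₁ l₁⁻¹,
              bubble15 N z₁ l₁ x ^ (((N : ℝ) + 2) / ((N : ℝ) - 2)) * bubble15 N z₂ l₂ x)
            ≤ (∫ x : EuclideanSpace ℝ (Fin N),
                bubble15 N z₁ l₁ x ^ (((N : ℝ) + 2) / ((N : ℝ) - 2)) * bubble15 N z₂ l₂ x) ∧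
          (∫ x : EuclideanSpace ℝ (Fin N),
              bubble15 N z₁ l₁ x ^ (((N : ℝ) + 2) / ((N : ℝ) - 2)) * bubble15 N z₂ l₂ x)
            ≤ C * ∫ x in ball z₁ l₁⁻¹,
                bubble15 N z₁ l₁ x ^ (((N : ℝ) + 2) / ((N : ℝ) - 2)) * bubble15 N z₂ l₂ x := by
  have hN3 : (3:ℝ) ≤ (N:ℝ) := by exact_mod_cast hN
  set J : ℝ := ∫ u : EuclideanSpace ℝ (Fin N), (1 + ‖u‖ ^ 2) ^ (-(((N : ℝ) + 2) / 2))
    with hJ_def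
  have hJ0 : 0 ≤ J := integral_nonneg fun u => Real.rpow_nonneg (by positivity) _
  set W : ℝ := (volume (ball (0 : EuclideanSpace ℝ (Fin N)) 1)).toReal with hW_def
  have hW0 : 0 < W :=
    ENNReal.toReal_pos (measure_ball_pos volume _ one_pos).ne' measure_ball_lt_top.ne
  set K0 : ℝ := 4 ^ (((N : ℝ) - 2) / 2) * J
      + 4 ^ (((N : ℝ) + 2) / 2) * W * 2 ^ (((N : ℝ) - 2) / 2)
      + 4 ^ (((N : ℝ) + 2) / 2) * J * 2 ^ (((N : ℝ) + 2) / 2) with hK0_def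
  have hK00 : 0 ≤ K0 := by
    have t1 : (0:ℝ) ≤ 4 ^ (((N : ℝ) - 2) / 2) * J :=
      mul_nonneg (Real.rpow_nonneg (by norm_num) _) hJ0
    have t2 : (0:ℝ) ≤ 4 ^ (((N : ℝ) + 2) / 2) * W * 2 ^ (((N : ℝ) - 2) / 2) :=
      mul_nonneg (mul_nonneg (Real.rpow_nonneg (by norm_num) _) hW0.le)
        (Real.rpow_nonneg (by norm_num) _)
    have t3 : (0:ℝ) ≤ 4 ^ (((N : ℝ) + 2) / 2) * J * 2 ^ (((N : ℝ) + 2) / 2) :=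
      mul_nonneg (mul_nonneg (Real.rpow_nonneg (by norm_num) _) hJ0)
        (Real.rpow_nonneg (by norm_num) _)
    rw [hK0_def]; linarith
  refine ⟨1, (K0 + 1) * (2 ^ (((N : ℝ) + 2) / 2) * 3 ^ (((N : ℝ) - 2) / 2)) / W, one_pos, ?_, ?_⟩
  · apply div_pos _ hW0
    apply mul_pos (by linarith)
    exact mul_pos (Real.rpow_pos_of_pos (by norm_num) _) (Real.rpow_pos_of_pos (by norm_num) _)
  intro z₁ z₂ l₁ l₂ hl₂ hle
  have hl₁ : 0 < l₁ := lt_of_lt_of_le hl₂ hle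
  have hgint := aux15_gint hN z₁ z₂ hl₁ hl₂
  have hC0 : (0:ℝ) < (((N : ℝ) * ((N : ℝ) - 2)) ^ (((N : ℝ) - 2) / 4)) ^ (((N : ℝ) + 2) / ((N : ℝ) - 2))
      * (((N : ℝ) * ((N : ℝ) - 2)) ^ (((N : ℝ) - 2) / 4))
      * l₁ ^ (((N : ℝ) + 2) / 2) * l₂ ^ (((N : ℝ) - 2) / 2) := by
    have hK0' : (0:ℝ) < (N : ℝ) * ((N : ℝ) - 2) := by nlinarith
    have h1 : (0:ℝ) < ((N : ℝ) * ((N : ℝ) - 2)) ^ (((N : ℝ) - 2) / 4) :=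
      Real.rpow_pos_of_pos hK0' _
    exact mul_pos (mul_pos (mul_pos (Real.rpow_pos_of_pos h1 _) h1)
      (Real.rpow_pos_of_pos hl₁ _)) (Real.rpow_pos_of_pos hl₂ _)
  -- lower bound positivity for the ball integral
  have hlow := aux15_lower hN z₁ z₂ hl₂ hle
  have hlhs0 : (0:ℝ) ≤ (2 ^ (-(((N : ℝ) + 2) / 2)) * (3 ^ (-(((N : ℝ) - 2) / 2))
      * (1 + l₂ ^ 2 * dist z₁ z₂ ^ 2) ^ (-(((N : ℝ) - 2) / 2))))
      * (l₁⁻¹ ^ N * W) := by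
    apply mul_nonneg
    · exact mul_nonneg (Real.rpow_nonneg (by norm_num) _)
        (mul_nonneg (Real.rpow_nonneg (by norm_num) _) (Real.rpow_nonneg (by positivity) _))
    · exact mul_nonneg (by positivity) hW0.le
  have hIb0 : (0:ℝ) ≤ ∫ x in ball z₁ l₁⁻¹,
      (1 + l₁ ^ 2 * ‖x - z₁‖ ^ 2) ^ (-(((N : ℝ) + 2) / 2))
        * (1 + l₂ ^ 2 * ‖x - z₂‖ ^ 2) ^ (-(((N : ℝ) - 2) / 2)) := le_trans hlhs0 hlow
  have hIbIt : (∫ x in ball z₁ l₁⁻¹,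
      (1 + l₁ ^ 2 * ‖x - z₁‖ ^ 2) ^ (-(((N : ℝ) + 2) / 2))
        * (1 + l₂ ^ 2 * ‖x - z₂‖ ^ 2) ^ (-(((N : ℝ) - 2) / 2)))
      ≤ ∫ x : EuclideanSpace ℝ (Fin N),
          (1 + l₁ ^ 2 * ‖x - z₁‖ ^ 2) ^ (-(((N : ℝ) + 2) / 2))
            * (1 + l₂ ^ 2 * ‖x - z₂‖ ^ 2) ^ (-(((N : ℝ) - 2) / 2)) :=
    setIntegral_le_integral hgint (Filter.Eventually.of_forall fun x =>
      mul_nonneg (Real.rpow_nonneg (by positivity) _) (Real.rpow_nonneg (by positivity) _))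
  -- key final inequality on the model integrals
  have hfinal : (∫ x : EuclideanSpace ℝ (Fin N),
      (1 + l₁ ^ 2 * ‖x - z₁‖ ^ 2) ^ (-(((N : ℝ) + 2) / 2))
        * (1 + l₂ ^ 2 * ‖x - z₂‖ ^ 2) ^ (-(((N : ℝ) - 2) / 2)))
      ≤ ((K0 + 1) * (2 ^ (((N : ℝ) + 2) / 2) * 3 ^ (((N : ℝ) - 2) / 2)) / W)
        * ∫ x in ball z₁ l₁⁻¹,
            (1 + l₁ ^ 2 * ‖x - z₁‖ ^ 2) ^ (-(((N : ℝ) + 2) / 2))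
              * (1 + l₂ ^ 2 * ‖x - z₂‖ ^ 2) ^ (-(((N : ℝ) - 2) / 2)) := by
    have hup : (∫ x : EuclideanSpace ℝ (Fin N),
        (1 + l₁ ^ 2 * ‖x - z₁‖ ^ 2) ^ (-(((N : ℝ) + 2) / 2))
          * (1 + l₂ ^ 2 * ‖x - z₂‖ ^ 2) ^ (-(((N : ℝ) - 2) / 2)))
        ≤ K0 * (l₁⁻¹ ^ N * (1 + l₂ ^ 2 * dist z₁ z₂ ^ 2) ^ (-(((N : ℝ) - 2) / 2))) := by
      rw [hK0_def, hJ_def, hW_def]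
      exact aux15_upper hN z₁ z₂ hl₂ hle
    have c2 : (2:ℝ) ^ (((N : ℝ) + 2) / 2) * 2 ^ (-(((N : ℝ) + 2) / 2)) = 1 := by
      rw [← Real.rpow_add (by norm_num : (0:ℝ) < 2), add_neg_cancel, Real.rpow_zero]
    have c3 : (3:ℝ) ^ (((N : ℝ) - 2) / 2) * 3 ^ (-(((N : ℝ) - 2) / 2)) = 1 := by
      rw [← Real.rpow_add (by norm_num : (0:ℝ) < 3), add_neg_cancel, Real.rpow_zero]
    have hVIb : (l₁⁻¹ ^ N * (1 + l₂ ^ 2 * dist z₁ z₂ ^ 2) ^ (-(((N : ℝ) - 2) / 2))) * W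
        ≤ (2 ^ (((N : ℝ) + 2) / 2) * 3 ^ (((N : ℝ) - 2) / 2))
          * ∫ x in ball z₁ l₁⁻¹,
              (1 + l₁ ^ 2 * ‖x - z₁‖ ^ 2) ^ (-(((N : ℝ) + 2) / 2))
                * (1 + l₂ ^ 2 * ‖x - z₂‖ ^ 2) ^ (-(((N : ℝ) - 2) / 2)) := by
      have h := mul_le_mul_of_nonneg_left hlow
        (show (0:ℝ) ≤ 2 ^ (((N : ℝ) + 2) / 2) * 3 ^ (((N : ℝ) - 2) / 2) from
          mul_nonneg (Real.rpow_nonneg (by norm_num) _) (Real.rpow_nonneg (by norm_num) _))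
      calc (l₁⁻¹ ^ N * (1 + l₂ ^ 2 * dist z₁ z₂ ^ 2) ^ (-(((N : ℝ) - 2) / 2))) * W
          = (2 ^ (((N : ℝ) + 2) / 2) * 3 ^ (((N : ℝ) - 2) / 2))
            * ((2 ^ (-(((N : ℝ) + 2) / 2)) * (3 ^ (-(((N : ℝ) - 2) / 2))
                * (1 + l₂ ^ 2 * dist z₁ z₂ ^ 2) ^ (-(((N : ℝ) - 2) / 2))))
              * (l₁⁻¹ ^ N * W)) := by
            linear_combination
              (-(l₁⁻¹ ^ N * (1 + l₂ ^ 2 * dist z₁ z₂ ^ 2) ^ (-(((N : ℝ) - 2) / 2)) * W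
                * (3 ^ (((N : ℝ) - 2) / 2) * 3 ^ (-(((N : ℝ) - 2) / 2))))) * c2
              + (-(l₁⁻¹ ^ N * (1 + l₂ ^ 2 * dist z₁ z₂ ^ 2) ^ (-(((N : ℝ) - 2) / 2)) * W)) * c3
        _ ≤ _ := h
    rw [div_mul_eq_mul_div, le_div_iff₀ hW0]
    calc (∫ x : EuclideanSpace ℝ (Fin N),
          (1 + l₁ ^ 2 * ‖x - z₁‖ ^ 2) ^ (-(((N : ℝ) + 2) / 2))
            * (1 + l₂ ^ 2 * ‖x - z₂‖ ^ 2) ^ (-(((N : ℝ) - 2) / 2))) * W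
        ≤ (K0 * (l₁⁻¹ ^ N * (1 + l₂ ^ 2 * dist z₁ z₂ ^ 2) ^ (-(((N : ℝ) - 2) / 2)))) * W :=
          mul_le_mul_of_nonneg_right hup hW0.le
      _ = K0 * ((l₁⁻¹ ^ N * (1 + l₂ ^ 2 * dist z₁ z₂ ^ 2) ^ (-(((N : ℝ) - 2) / 2))) * W) := by
          ring
      _ ≤ K0 * ((2 ^ (((N : ℝ) + 2) / 2) * 3 ^ (((N : ℝ) - 2) / 2))
            * ∫ x in ball z₁ l₁⁻¹,
                (1 + l₁ ^ 2 * ‖x - z₁‖ ^ 2) ^ (-(((N : ℝ) + 2) / 2))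
                  * (1 + l₂ ^ 2 * ‖x - z₂‖ ^ 2) ^ (-(((N : ℝ) - 2) / 2))) :=
          mul_le_mul_of_nonneg_left hVIb hK00
      _ ≤ (K0 + 1) * ((2 ^ (((N : ℝ) + 2) / 2) * 3 ^ (((N : ℝ) - 2) / 2))
            * ∫ x in ball z₁ l₁⁻¹,
                (1 + l₁ ^ 2 * ‖x - z₁‖ ^ 2) ^ (-(((N : ℝ) + 2) / 2))
                  * (1 + l₂ ^ 2 * ‖x - z₂‖ ^ 2) ^ (-(((N : ℝ) - 2) / 2))) := by
          apply mul_le_mul_of_nonneg_right (by linarith)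
          exact mul_nonneg
            (mul_nonneg (Real.rpow_nonneg (by norm_num) _) (Real.rpow_nonneg (by norm_num) _))
            hIb0
      _ = ((K0 + 1) * (2 ^ (((N : ℝ) + 2) / 2) * 3 ^ (((N : ℝ) - 2) / 2)))
            * ∫ x in ball z₁ l₁⁻¹,
                (1 + l₁ ^ 2 * ‖x - z₁‖ ^ 2) ^ (-(((N : ℝ) + 2) / 2))
                  * (1 + l₂ ^ 2 * ‖x - z₂‖ ^ 2) ^ (-(((N : ℝ) - 2) / 2)) := by ring
  constructor
  · simp only [aux15_prod hN z₁ z₂ hl₁ hl₂]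
    rw [integral_const_mul, integral_const_mul, one_mul]
    exact mul_le_mul_of_nonneg_left hIbIt hC0.le
  · simp only [aux15_prod hN z₁ z₂ hl₁ hl₂]
    rw [integral_const_mul, integral_const_mul]
    calc _ ≤ _ := mul_le_mul_of_nonneg_left hfinal hC0.le
      _ = ((K0 + 1) * (2 ^ (((N : ℝ) + 2) / 2) * 3 ^ (((N : ℝ) - 2) / 2)) / W)
          * ((((N : ℝ) * ((N : ℝ) - 2)) ^ (((N : ℝ) - 2) / 4)) ^ (((N : ℝ) + 2) / ((N : ℝ) - 2))
            * (((N : ℝ) * ((N : ℝ) - 2)) ^ (((N : ℝ) - 2) / 4))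
            * l₁ ^ (((N : ℝ) + 2) / 2) * l₂ ^ (((N : ℝ) - 2) / 2)
            * ∫ x in ball z₁ l₁⁻¹,
                (1 + l₁ ^ 2 * ‖x - z₁‖ ^ 2) ^ (-(((N : ℝ) + 2) / 2))
                  * (1 + l₂ ^ 2 * ‖x - z₂‖ ^ 2) ^ (-(((N : ℝ) - 2) / 2))) := by ring
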